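/- For every n ≥ 4, there exists σ ∈ S_n with σρσ⁻¹ ∉ ⟨ρ⟩ (where ρ = (1 2 … n)), and hence Φ_{n,n} ≠ Ψ_{n,n}: the corresponding matrix T is a vertex of Φ_{n,n} that is not in Ψ_{n,n}. In particular n! > n·φ(n) for n ≥ 4. -/

import Mathlib

open Finset Matrix

/-- The cyclic permutation `(1 2 … n)`, acting on `ZMod n` by `j ↦ j + 1`. -/
def rho (n : ℕ) : Equiv.Perm (ZMod n) := Equiv.addLeft 1

/-- `M` is an `n × n` doubly stochastic matrix. -/
def IsDS (n : ℕ) [NeZero n] (M : Matrix (ZMod n) (ZMod n) ℝ) : Prop :=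
  (∀ i j, 0 ≤ M i j) ∧ (∀ i, ∑ j, M i j = 1) ∧ (∀ j, ∑ i, M i j = 1)

/-- The permutation matrix of `p` (entry `(i,j)` is `1` iff `p j = i`). -/
def PM {R : Type*} [Zero R] [One R] (n : ℕ) (p : Equiv.Perm (ZMod n)) :
    Matrix (ZMod n) (ZMod n) R :=
  fun i j => if p j = i then 1 else 0

/-- Friedland's polytope `Φ_{n,n}`: nonnegative `n² × n²` matrices, doubly stochastic in the
double-index sense, satisfying the partial-sum constraints. -/
def Phi (n : ℕ) [NeZero n] : Set (Matrix (ZMod n × ZMod n) (ZMod n × ZMod n) ℝ) :=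
  {C | (∀ p q, 0 ≤ C p q) ∧
       (∀ p, ∑ q, C p q = 1) ∧ (∀ q, ∑ p, C p q = 1) ∧
       (∀ i k l, ∑ j, C (i, k) (j, l) = ∑ j, C (0, k) (j, l)) ∧
       (∀ i k l, ∑ j, C (j, k) (i, l) = ∑ j, C (0, k) (j, l)) ∧
       (∀ i j k, ∑ l, C (i, k) (j, l) = ∑ l, C (i, 0) (j, l)) ∧
       (∀ i j k, ∑ l, C (i, l) (j, k) = ∑ l, C (i, 0) (j, l))}

/-- The polytope `Ψ_{n,n}`: the convex hull of Kronecker products of doubly stochastic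
matrices. -/
def Psi (n : ℕ) [NeZero n] : Set (Matrix (ZMod n × ZMod n) (ZMod n × ZMod n) ℝ) :=
  convexHull ℝ {M | ∃ A B, IsDS n A ∧ IsDS n B ∧ M = Matrix.kroneckerMap (· * ·) A B}

/-- The matrix `T`, with `T_{(i,k),(j,l)} = 1/n` iff `σρ^{j-1}(l) = ρ^{i-1}(k)`. -/
noncomputable def Tmat (n : ℕ) (σ : Equiv.Perm (ZMod n)) :
    Matrix (ZMod n × ZMod n) (ZMod n × ZMod n) ℝ :=
  fun p q => if σ (q.2 + q.1) = p.2 + p.1 then (1 : ℝ) / n else 0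

/-! Take `σ = (0 1)`. If `x ∈ Φ` vanishes wherever `T = T_σ` does, the line-sum constraints of
`Φ` make each entry `x (i,k) (j,l)` on the support equal both to the block sum
`f i j = ∑ l, x (i,0) (j,l)` and to a block sum depending on `(k, l)` only. Comparing two
entries with the same `(k, l)` gives `f i j = f (σ (m+1) - σ m + i) (j+1)` for all `m`. The
differences `σ (m+1) - σ m` take two values differing by `1` (which is also what keeps `σρσ⁻¹`
out of `⟨ρ⟩`), so `f` is invariant under both unit shifts, hence constant, and the row sums
give `x = T`: `T` is a vertex of `Φ`. A vertex of `Φ` lying in `Ψ ⊆ Φ` is a vertex of `Ψ`,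
hence a Kronecker product `A ⊗ B` of doubly stochastic matrices; the block sums of `T` then
force all entries of `A` and `B` to be `1/n`, contradicting the zero entries of `T`. -/

lemma ZMod.apply_eq_apply_of_add_one {n : ℕ} [NeZero n] {α : Type*} {f : ZMod n → α}
    (hf : ∀ x, f (x + 1) = f x) (x y : ZMod n) : f x = f y := by
  have shift : ∀ (m : ℕ) (z : ZMod n), f (z + m) = f z := by
    intro m
    induction m with
    | zero => simp
    | succ m ih => intro z; rw [Nat.cast_succ, ← add_assoc, hf, ih]
  simpa using (shift (y - x).val x).symm

lemma Nat.mul_totient_lt_factorial {n : ℕ} (hn : 4 ≤ n) : n * n.totient < n.factorial := by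
  obtain ⟨m, rfl⟩ : ∃ m, n = m + 1 := ⟨n - 1, by omega⟩
  calc (m + 1) * (m + 1).totient ≤ (m + 1) * m :=
        Nat.mul_le_mul_left _ (Nat.le_of_lt_succ (Nat.totient_lt _ (by omega)))
    _ < (m + 1) * m.factorial :=
        Nat.mul_lt_mul_of_pos_left (Nat.lt_factorial_self (by omega)) (by omega)
    _ = (m + 1).factorial := (Nat.factorial_succ m).symm

lemma mem_extremePoints_of_eq_of_support_subset {ι κ : Type*} {S : Set (Matrix ι κ ℝ)}
    {t : Matrix ι κ ℝ} (hS : ∀ y ∈ S, ∀ i j, 0 ≤ y i j) (ht : t ∈ S)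
    (huniq : ∀ y ∈ S, (∀ i j, t i j = 0 → y i j = 0) → y = t) :
    t ∈ S.extremePoints ℝ := by
  refine mem_extremePoints.2 ⟨ht, fun x₁ hx₁ x₂ hx₂ ⟨a, b, ha, hb, _, hab⟩ => ?_⟩
  have hentry : ∀ i j, a * x₁ i j + b * x₂ i j = t i j := fun i j => by
    simpa using congrFun (congrFun hab i) j
  constructor
  · refine huniq x₁ hx₁ fun i j htij => ?_
    nlinarith [hentry i j, hS x₁ hx₁ i j, mul_nonneg hb.le (hS x₂ hx₂ i j)]
  · refine huniq x₂ hx₂ fun i j htij => ?_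
    nlinarith [hentry i j, hS x₂ hx₂ i j, mul_nonneg ha.le (hS x₁ hx₁ i j)]

lemma ZMod.sum_const_one_div {n : ℕ} [NeZero n] : ∑ _x : ZMod n, (1 / n : ℝ) = 1 := by
  simp [ZMod.card]

section Tmat

variable {n : ℕ} [NeZero n] (σ : Equiv.Perm (ZMod n))

lemma Tmat_apply_eq_zero_iff {i k j l : ZMod n} :
    Tmat n σ (i, k) (j, l) = 0 ↔ σ (l + j) ≠ k + i := by
  simp [Tmat, NeZero.ne n]

lemma sum_Tmat_col_snd (i k j : ZMod n) : ∑ l, Tmat n σ (i, k) (j, l) = 1 / n := by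
  simp [Tmat, ← Equiv.eq_symm_apply, ← eq_sub_iff_add_eq]

lemma sum_Tmat_col_fst (i k l : ZMod n) : ∑ j, Tmat n σ (i, k) (j, l) = 1 / n := by
  simp [Tmat, ← Equiv.eq_symm_apply, ← eq_sub_iff_add_eq']

lemma sum_Tmat_row_fst (k j l : ZMod n) : ∑ i, Tmat n σ (i, k) (j, l) = 1 / n := by
  simp [Tmat, eq_comm (a := σ _), ← eq_sub_iff_add_eq']

lemma sum_Tmat_row_snd (i j l : ZMod n) : ∑ k, Tmat n σ (i, k) (j, l) = 1 / n := by
  simp [Tmat, eq_comm (a := σ _), ← eq_sub_iff_add_eq]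

end Tmat

section Polytopes

variable {n : ℕ} [NeZero n]

lemma Tmat_mem_Phi (σ : Equiv.Perm (ZMod n)) : Tmat n σ ∈ Phi n := by
  refine ⟨fun p q => ?_, fun p => ?_, fun q => ?_, fun i k l => ?_, fun i k l => ?_,
    fun i j k => ?_, fun i j k => ?_⟩
  · unfold Tmat; positivity
  · simp only [Fintype.sum_prod_type, sum_Tmat_col_snd, ZMod.sum_const_one_div]
  · simp only [Fintype.sum_prod_type, sum_Tmat_row_snd, ZMod.sum_const_one_div]
  · simp only [sum_Tmat_col_fst]
  · simp only [sum_Tmat_row_fst, sum_Tmat_col_fst]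
  · simp only [sum_Tmat_col_snd]
  · simp only [sum_Tmat_row_snd, sum_Tmat_col_snd]

lemma convex_Phi : Convex ℝ (Phi n) := by
  rintro x ⟨x0, xr, xc, x4, x5, x6, x7⟩ y ⟨y0, yr, yc, y4, y5, y6, y7⟩ a b ha hb hab
  have entry : ∀ p q, (a • x + b • y) p q = a * x p q + b * y p q := fun _ _ => rfl
  refine ⟨fun p q => ?_, fun p => ?_, fun q => ?_, fun i k l => ?_, fun i k l => ?_,
    fun i j k => ?_, fun i j k => ?_⟩
  · rw [entry]; exact add_nonneg (mul_nonneg ha (x0 p q)) (mul_nonneg hb (y0 p q))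
  all_goals simp only [entry, Finset.sum_add_distrib, ← Finset.mul_sum]
  · rw [xr, yr, mul_one, mul_one, hab]
  · rw [xc, yc, mul_one, mul_one, hab]
  · rw [x4, y4]
  · rw [x5, y5]
  · rw [x6, y6]
  · rw [x7, y7]

lemma kroneckerMap_mul_mem_Phi {A B : Matrix (ZMod n) (ZMod n) ℝ} (hA : IsDS n A)
    (hB : IsDS n B) : Matrix.kroneckerMap (· * ·) A B ∈ Phi n := by
  obtain ⟨A0, Ar, Ac⟩ := hA
  obtain ⟨B0, Br, Bc⟩ := hB
  have entry : ∀ p q : ZMod n × ZMod n,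
      Matrix.kroneckerMap (· * ·) A B p q = A p.1 q.1 * B p.2 q.2 := fun _ _ => rfl
  refine ⟨fun p q => ?_, fun p => ?_, fun q => ?_, fun i k l => ?_, fun i k l => ?_,
    fun i j k => ?_, fun i j k => ?_⟩
  · rw [entry]; exact mul_nonneg (A0 _ _) (B0 _ _)
  · simp only [Fintype.sum_prod_type, entry, ← Finset.mul_sum, Br, mul_one, Ar]
  · simp only [Fintype.sum_prod_type, entry, ← Finset.mul_sum, Bc, mul_one, Ac]
  · simp only [entry, ← Finset.sum_mul, Ar]
  · simp only [entry, ← Finset.sum_mul, Ac, Ar]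
  · simp only [entry, ← Finset.mul_sum, Br]
  · simp only [entry, ← Finset.mul_sum, Bc, Br]

lemma Psi_subset_Phi : Psi n ⊆ Phi n :=
  convexHull_min (by rintro _ ⟨A, B, hA, hB, rfl⟩; exact kroneckerMap_mul_mem_Phi hA hB)
    convex_Phi

end Polytopes

section Support

variable {n : ℕ} [NeZero n] {σ : Equiv.Perm (ZMod n)}
  {x : Matrix (ZMod n × ZMod n) (ZMod n × ZMod n) ℝ}

lemma apply_eq_sum_col_snd_of_support (hx : x ∈ Phi n)
    (hsupp : ∀ p q, Tmat n σ p q = 0 → x p q = 0) {i k j l : ZMod n}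
    (h : σ (l + j) = k + i) : x (i, k) (j, l) = ∑ l', x (i, 0) (j, l') := by
  rw [← hx.2.2.2.2.2.1 i j k, Finset.sum_eq_single l (fun l' _ hl' => ?_) (by simp)]
  refine hsupp _ _ ((Tmat_apply_eq_zero_iff σ).2 fun h' => hl' ?_)
  exact add_right_cancel (σ.injective (h'.trans h.symm))

lemma apply_eq_sum_col_fst_of_support (hx : x ∈ Phi n)
    (hsupp : ∀ p q, Tmat n σ p q = 0 → x p q = 0) {i k j l : ZMod n}
    (h : σ (l + j) = k + i) : x (i, k) (j, l) = ∑ j', x (0, k) (j', l) := by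
  rw [← hx.2.2.2.1 i k l, Finset.sum_eq_single j (fun j' _ hj' => ?_) (by simp)]
  refine hsupp _ _ ((Tmat_apply_eq_zero_iff σ).2 fun h' => hj' ?_)
  exact add_left_cancel (σ.injective (h'.trans h.symm))

/-- Both sides are entries `x (_, σ m - i) (_, m - j)` on the support of `T`, so both equal
`∑ j', x (0, σ m - i) (j', m - j)`. -/
lemma sum_col_snd_eq_of_support (hx : x ∈ Phi n)
    (hsupp : ∀ p q, Tmat n σ p q = 0 → x p q = 0) (m i j : ZMod n) :
    ∑ l, x (i, 0) (j, l) = ∑ l, x (σ (m + 1) - σ m + i, 0) (j + 1, l) := by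
  rw [← apply_eq_sum_col_snd_of_support hx hsupp (k := σ m - i) (l := m - j) (by simp),
    ← apply_eq_sum_col_snd_of_support hx hsupp (k := σ m - i) (l := m - j) (by ring_nf),
    apply_eq_sum_col_fst_of_support hx hsupp (by simp),
    apply_eq_sum_col_fst_of_support hx hsupp (by ring_nf)]

end Support

lemma conj_rho_notMem_zpowers {n : ℕ} [Nontrivial (ZMod n)] {σ : Equiv.Perm (ZMod n)}
    {m m' : ZMod n} (hd : σ (m + 1) - σ m = σ (m' + 1) - σ m' + 1) :
    σ * rho n * σ⁻¹ ∉ Subgroup.zpowers (rho n) := by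
  rintro ⟨c, hc⟩
  have hconst : ∀ m, σ (m + 1) - σ m = c := fun m => by
    have := DFunLike.congr_fun hc (σ m)
    simp only [rho, Equiv.zsmul_addLeft, zsmul_eq_mul, mul_one, Equiv.coe_addLeft,
      Equiv.Perm.coe_mul, Equiv.Perm.coe_inv, Function.comp_apply, Equiv.symm_apply_apply] at this
    rw [add_comm m, ← this]
    ring
  rw [hconst, hconst] at hd
  exact one_ne_zero (left_eq_add.mp hd)

section Vertex

variable {n : ℕ} [NeZero n] {σ : Equiv.Perm (ZMod n)} {m m' : ZMod n}

lemma eq_Tmat_of_support (hd : σ (m + 1) - σ m = σ (m' + 1) - σ m' + 1)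
    {x : Matrix (ZMod n × ZMod n) (ZMod n × ZMod n) ℝ} (hx : x ∈ Phi n)
    (hsupp : ∀ p q, Tmat n σ p q = 0 → x p q = 0) : x = Tmat n σ := by
  set f : ZMod n → ZMod n → ℝ := fun i j => ∑ l, x (i, 0) (j, l)
  have shift : ∀ m i j, f i j = f (σ (m + 1) - σ m + i) (j + 1) :=
    sum_col_snd_eq_of_support hx hsupp
  set d := σ (m' + 1) - σ m'
  have shift_fst : ∀ i j, f (i + 1) j = f i j := fun i j => by
    have h := shift m (i - d) (j - 1)
    have h' := shift m' (i - d) (j - 1)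
    rw [hd, show d + 1 + (i - d) = i + 1 by ring, sub_add_cancel] at h
    rw [show d + (i - d) = i by ring, sub_add_cancel] at h'
    exact h.symm.trans h'
  have shift_snd : ∀ i j, f i (j + 1) = f i j := fun i j =>
    (ZMod.apply_eq_apply_of_add_one (f := (f · (j + 1))) (shift_fst · (j + 1)) i _).trans
      (shift m' i j).symm
  have hval : ∀ i j, f i j = 1 / n := fun i j => by
    have hrow : ∑ _j' : ZMod n, f i j = 1 := by
      rw [← hx.2.1 (i, 0), Fintype.sum_prod_type]
      exact Finset.sum_congr rfl fun j' _ =>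
        ZMod.apply_eq_apply_of_add_one (shift_snd i) j j'
    rw [Finset.sum_const, Finset.card_univ, ZMod.card, nsmul_eq_mul] at hrow
    rw [eq_div_iff (Nat.cast_ne_zero.2 (NeZero.ne n))]
    linarith
  ext ⟨i, k⟩ ⟨j, l⟩
  by_cases h : σ (l + j) = k + i
  · rw [apply_eq_sum_col_snd_of_support hx hsupp h]
    simpa [Tmat, h] using hval i j
  · rw [hsupp _ _ ((Tmat_apply_eq_zero_iff σ).2 h)]
    simp [Tmat, h]

lemma Tmat_mem_extremePoints_Phi (hd : σ (m + 1) - σ m = σ (m' + 1) - σ m' + 1) :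
    Tmat n σ ∈ (Phi n).extremePoints ℝ :=
  mem_extremePoints_of_eq_of_support_subset (fun _ hy => hy.1) (Tmat_mem_Phi σ)
    fun _ hy hsupp => eq_Tmat_of_support hd hy hsupp

lemma Tmat_ne_kroneckerMap_mul [Nontrivial (ZMod n)] (σ : Equiv.Perm (ZMod n))
    {A B : Matrix (ZMod n) (ZMod n) ℝ} (hA : IsDS n A) (hB : IsDS n B) :
    Tmat n σ ≠ Matrix.kroneckerMap (· * ·) A B := by
  intro h
  have hAn : ∀ i j, (n : ℝ) * A i j = 1 := fun i j => calc
    (n : ℝ) * A i j = ∑ k, ∑ l, A i j * B k l := by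
      simp [← Finset.mul_sum, hB.2.1, ZMod.card]
    _ = ∑ k, ∑ l, Tmat n σ (i, k) (j, l) := by rw [h]; rfl
    _ = 1 := by simp only [sum_Tmat_col_snd, ZMod.sum_const_one_div]
  have hBn : ∀ k l, (n : ℝ) * B k l = 1 := fun k l => calc
    (n : ℝ) * B k l = ∑ i, ∑ j, A i j * B k l := by
      simp [← Finset.sum_mul, hA.2.1, ZMod.card]
    _ = ∑ i, ∑ j, Tmat n σ (i, k) (j, l) := by rw [h]; rfl
    _ = 1 := by simp only [sum_Tmat_col_fst, ZMod.sum_const_one_div]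
  have hzero : A 0 0 * B (σ 0 + 1) 0 = 0 := by
    change Matrix.kroneckerMap (· * ·) A B (0, σ 0 + 1) (0, 0) = 0
    rw [← h]
    exact (Tmat_apply_eq_zero_iff σ).2 (by simp)
  refine one_ne_zero (calc
    (1 : ℝ) = n * A 0 0 * (n * B (σ 0 + 1) 0) := by rw [hAn, hBn, one_mul]
    _ = n * n * (A 0 0 * B (σ 0 + 1) 0) := by ring
    _ = 0 := by rw [hzero, mul_zero])

lemma Tmat_notMem_Psi [Nontrivial (ZMod n)] (hT : Tmat n σ ∈ (Phi n).extremePoints ℝ) :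
    Tmat n σ ∉ Psi n := fun hmem => by
  obtain ⟨A, B, hA, hB, hAB⟩ := extremePoints_convexHull_subset
    (inter_extremePoints_subset_extremePoints_of_subset Psi_subset_Phi ⟨hmem, hT⟩)
  exact Tmat_ne_kroneckerMap_mul σ hA hB hAB

end Vertex

lemma swap_zero_one_add_one_sub {n : ℕ} (hn : 4 ≤ n) :
    Equiv.swap (0 : ZMod n) 1 (1 + 1) - Equiv.swap (0 : ZMod n) 1 1 =
      Equiv.swap (0 : ZMod n) 1 (2 + 1) - Equiv.swap (0 : ZMod n) 1 2 + 1 := by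
  have : Fact (1 < n) := ⟨by omega⟩
  have h2 : (2 : ZMod n).val = 2 := ZMod.val_ofNat_of_lt (a := 2) (by omega)
  have h3 : (3 : ZMod n).val = 3 := ZMod.val_ofNat_of_lt (a := 3) (by omega)
  have fix2 : Equiv.swap (0 : ZMod n) 1 2 = 2 := Equiv.swap_apply_of_ne_of_ne
    (mt (congrArg ZMod.val) (by simp [h2])) (mt (congrArg ZMod.val) (by simp [h2, ZMod.val_one]))
  have fix3 : Equiv.swap (0 : ZMod n) 1 3 = 3 := Equiv.swap_apply_of_ne_of_ne
    (mt (congrArg ZMod.val) (by simp [h3])) (mt (congrArg ZMod.val) (by simp [h3, ZMod.val_one]))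
  rw [one_add_one_eq_two, two_add_one_eq_three, fix2, fix3, Equiv.swap_apply_right]
  ring

/-- For every `n ≥ 4` there is `σ` with `σρσ⁻¹ ∉ ⟨ρ⟩`; the corresponding `T` is an extreme
point of `Φ_{n,n}` not belonging to `Ψ_{n,n}`, whence `Φ_{n,n} ≠ Ψ_{n,n}`.
In particular `n! > n·φ(n)`. -/
theorem stmt19 (n : ℕ) [NeZero n] (hn : 4 ≤ n) :
    (∃ σ : Equiv.Perm (ZMod n),
        σ * rho n * σ⁻¹ ∉ Subgroup.zpowers (rho n) ∧
        Tmat n σ ∈ Set.extremePoints ℝ (Phi n) ∧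
        Tmat n σ ∉ Psi n) ∧
      Phi n ≠ Psi n ∧ n * Nat.totient n < Nat.factorial n := by
  have : Fact (1 < n) := ⟨by omega⟩
  have hd := swap_zero_one_add_one_sub hn
  have hT := Tmat_mem_extremePoints_Phi hd
  have hPsi := Tmat_notMem_Psi hT
  exact ⟨⟨_, conj_rho_notMem_zpowers hd, hT, hPsi⟩, fun h => hPsi (h ▸ hT.1),
    Nat.mul_totient_lt_factorial hn⟩
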